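/- Fix a constant c_U > 0. For the function Q̂(N) = c·(4^α/(8 − 4^α))·(N^{1.5}/M^{1.5−α} − N^α) + N^{1.5}/M^{1.5−α} and Q(N) = N^{1.5}/M^{0.5}, there exists a constant c_{MM} > 0 such that for all M sufficiently large, if α ≤ 1 − log_M(1 + c_{MM}) then Q̂(N) ≤ c_U·Q(N) for all N ≥ M. -/
import Mathlib


open Real

/-- Parallelizability of matrix multiplication in the NP model: for the
effective cache complexity
`Q̂ N = c·(4^α/(8−4^α))·(N^{1.5}/M^{1.5−α} − N^α) + N^{1.5}/M^{1.5−α}`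
and the parallel cache complexity `Q N = N^{1.5}/M^{0.5}`, there is a constant
`c_MM > 0` such that for all sufficiently large `M`, whenever
`α ≤ 1 − log_M (1 + c_MM)` we have `Q̂ N ≤ c_U · Q N` for all `N ≥ M`. -/
theorem stmt8 (c cU : ℝ) (hc : 0 < c) (hcU : 0 < cU) :
    ∃ cMM : ℝ, 0 < cMM ∧ ∃ M₀ : ℝ, ∀ M : ℝ, M₀ ≤ M →
      ∀ α N : ℝ, α ≤ 1 - Real.logb M (1 + cMM) → M ≤ N →
        c * ((4 : ℝ) ^ α / (8 - (4 : ℝ) ^ α)) *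
            (N ^ ((3 : ℝ) / 2) / M ^ ((3 : ℝ) / 2 - α) - N ^ α)
          + N ^ ((3 : ℝ) / 2) / M ^ ((3 : ℝ) / 2 - α)
        ≤ cU * (N ^ ((3 : ℝ) / 2) / M ^ ((1 : ℝ) / 2)) := by
  refine ⟨(c + 1) / cU, by positivity, 2, fun M hM α N hα hN => ?_⟩
  have hM1 : (1:ℝ) < M := by linarith
  have hM0 : (0:ℝ) < M := by linarith
  have hN0 : (0:ℝ) < N := by linarith
  have hcMM : (0:ℝ) < (c + 1) / cU := by positivity
  have hlogb : 0 ≤ Real.logb M (1 + (c + 1) / cU) :=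
    Real.logb_nonneg hM1 (by linarith)
  have hα1 : α ≤ 1 := by linarith
  have h4 : (4:ℝ) ^ α ≤ 4 := by
    calc (4:ℝ) ^ α ≤ (4:ℝ) ^ (1:ℝ) :=
          Real.rpow_le_rpow_of_exponent_le (by norm_num) hα1
      _ = 4 := Real.rpow_one 4
  have h40 : (0:ℝ) < (4:ℝ) ^ α := Real.rpow_pos_of_pos (by norm_num) α
  have h8 : (4:ℝ) ≤ 8 - (4:ℝ) ^ α := by linarith
  have hr0 : 0 ≤ (4:ℝ) ^ α / (8 - (4:ℝ) ^ α) := by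
    apply div_nonneg h40.le; linarith
  have hr1 : (4:ℝ) ^ α / (8 - (4:ℝ) ^ α) ≤ 1 := by
    rw [div_le_one (by linarith)]; linarith
  have hexp : (0:ℝ) ≤ 3 / 2 - α := by linarith
  have hMN : M ^ ((3:ℝ)/2 - α) ≤ N ^ ((3:ℝ)/2 - α) :=
    Real.rpow_le_rpow hM0.le hN hexp
  have hMa : 0 < M ^ ((3:ℝ)/2 - α) := Real.rpow_pos_of_pos hM0 _
  have hNα : 0 ≤ N ^ α := (Real.rpow_nonneg hN0.le α)
  have hXα : N ^ α ≤ N ^ ((3:ℝ)/2) / M ^ ((3:ℝ)/2 - α) := by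
    rw [le_div_iff₀ hMa]
    calc N ^ α * M ^ ((3:ℝ)/2 - α) ≤ N ^ α * N ^ ((3:ℝ)/2 - α) :=
          mul_le_mul_of_nonneg_left hMN hNα
      _ = N ^ ((3:ℝ)/2) := by
          rw [← Real.rpow_add hN0]; ring_nf
  have hkey : (1 + (c + 1) / cU) * M ^ ((1:ℝ)/2) ≤ M ^ ((3:ℝ)/2 - α) := by
    have h1 : (1 + (c + 1) / cU) = M ^ Real.logb M (1 + (c + 1) / cU) :=
      (Real.rpow_logb hM0 (ne_of_gt hM1) (by linarith)).symm
    rw [h1, ← Real.rpow_add hM0]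
    exact Real.rpow_le_rpow_of_exponent_le hM1.le (by linarith)
  set X := N ^ ((3:ℝ)/2) / M ^ ((3:ℝ)/2 - α) with hXdef
  have hX0 : 0 ≤ X := le_trans hNα hXα
  have h1 : c * ((4:ℝ) ^ α / (8 - (4:ℝ) ^ α)) * (X - N ^ α) ≤ c * (X - N ^ α) := by
    have hY : 0 ≤ X - N ^ α := by linarith
    nlinarith [mul_le_mul_of_nonneg_left hr1 hc.le]
  have hM12 : 0 < M ^ ((1:ℝ)/2) := Real.rpow_pos_of_pos hM0 _
  have h2 : (c + 1) * X ≤ cU * (N ^ ((3:ℝ)/2) / M ^ ((1:ℝ)/2)) := by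
    rw [hXdef, ← mul_div_assoc, ← mul_div_assoc, div_le_div_iff₀ hMa hM12]
    have hc' : cU * (1 + (c + 1) / cU) = cU + (c + 1) := by
      field_simp
    have hkey2 : (c + 1) * M ^ ((1:ℝ)/2) ≤ cU * M ^ ((3:ℝ)/2 - α) := by
      calc (c + 1) * M ^ ((1:ℝ)/2) ≤ (cU + (c + 1)) * M ^ ((1:ℝ)/2) := by
            nlinarith
        _ = cU * ((1 + (c + 1) / cU) * M ^ ((1:ℝ)/2)) := by
            rw [← mul_assoc, hc']
        _ ≤ cU * M ^ ((3:ℝ)/2 - α) := by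
            exact mul_le_mul_of_nonneg_left hkey hcU.le
    have hN32 : 0 ≤ N ^ ((3:ℝ)/2) := Real.rpow_nonneg hN0.le _
    calc (c + 1) * N ^ ((3:ℝ)/2) * M ^ ((1:ℝ)/2)
        = N ^ ((3:ℝ)/2) * ((c + 1) * M ^ ((1:ℝ)/2)) := by ring
      _ ≤ N ^ ((3:ℝ)/2) * (cU * M ^ ((3:ℝ)/2 - α)) :=
          mul_le_mul_of_nonneg_left hkey2 hN32
      _ = cU * N ^ ((3:ℝ)/2) * M ^ ((3:ℝ)/2 - α) := by ring
  have h3 : c * N ^ α ≥ 0 := by positivity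
  linarith
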